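/- arXiv:1608.06931 — 2 statements merged into one kernel-verified Lean document; each statement's English description precedes it below -/
import Mathlib

section
/- Let σ be a permutation of size n, let i ≠ j be indices, and let S be the span of i and j in σ. Then |S| ≤ d_σ(i,j) − 2, and for every set of indices X ⊆ {1,…,n} with i ∉ X and j ∉ X one has σ_⟨S ∪ {i} ∪ X⟩ = σ_⟨S ∪ {j} ∪ X⟩; in particular σ_⟨S ∪ {i}⟩ = σ_⟨S ∪ {j}⟩. -/
open Finset

namespace Prolific

/-- The L¹ ("taxicab") distance between the `i`th and `j`th entries of `σ`. -/
def dperm {n : ℕ} (σ : Equiv.Perm (Fin n)) (i j : Fin n) : ℕ :=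
  Nat.dist (i : ℕ) (j : ℕ) + Nat.dist (σ i : ℕ) (σ j : ℕ)

/-- The breadth of a permutation: the minimum distance between two distinct entries. -/
noncomputable def breadth {n : ℕ} (σ : Equiv.Perm (Fin n)) : ℕ :=
  sInf {d : ℕ | ∃ i j : Fin n, i ≠ j ∧ d = dperm σ i j}

/-- The pattern `σ_⟨A⟩` of `σ` obtained by deleting the entries in positions `A`. -/
noncomputable def pattern {n m : ℕ} (σ : Equiv.Perm (Fin n)) (A : Finset (Fin n))
    (h : Aᶜ.card = m) : Equiv.Perm (Fin m) :=
  (Aᶜ.orderIsoOfFin h).toEquiv.trans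
    (((Equiv.subtypeEquiv (σ : Equiv.Perm (Fin n)) (fun a => by
        constructor
        · exact fun ha => Finset.mem_image_of_mem σ ha
        · intro ha
          rcases Finset.mem_image.mp ha with ⟨x, hx, hxa⟩
          rwa [← σ.injective hxa])).trans
      ((Aᶜ.image σ).orderIsoOfFin
        (by rw [Finset.card_image_of_injective _ σ.injective, h])).toEquiv.symm))

/-- `σ_⟨A⟩ = σ_⟨B⟩` (in particular the two patterns have the same size). -/
def PatternEq {n : ℕ} (σ : Equiv.Perm (Fin n)) (A B : Finset (Fin n)) : Prop :=
  ∃ (m : ℕ) (hA : Aᶜ.card = m) (hB : Bᶜ.card = m), pattern σ A hA = pattern σ B hB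

/-- `σ` is `k`-prolific: distinct `k`-element sets of positions produce distinct patterns. -/
def IsProlific {n : ℕ} (k : ℕ) (σ : Equiv.Perm (Fin n)) : Prop :=
  ∀ A B : Finset (Fin n), A.card = k → B.card = k → A ≠ B → ¬ PatternEq σ A B


/-- The span of `i` and `j` in `σ`: entries (other than `i` and `j`) whose position lies
strictly between `i` and `j` or whose value lies strictly between `σ i` and `σ j`. -/
def span {n : ℕ} (σ : Equiv.Perm (Fin n)) (i j : Fin n) : Finset (Fin n) :=
  univ.filter fun p => p ≠ i ∧ p ≠ j ∧
    (((i < p ∧ p < j) ∨ (j < p ∧ p < i)) ∨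
      ((σ i < σ p ∧ σ p < σ j) ∨ (σ j < σ p ∧ σ p < σ i)))

end Prolific

/-!
The transposition of `i` and `j` maps the positions that survive the deletion of
`S ∪ {i} ∪ X` bijectively onto those that survive the deletion of `S ∪ {j} ∪ X`. Every
surviving entry lies outside the span `S`, so it compares with `i` exactly as it compares
with `j`, both in position and in value; hence the transposition preserves both orders and
the two patterns coincide. The span is covered by the positions strictly between `i` and `j`
and by the entries with values strictly between `σ i` and `σ j`, which gives the bound on `|S|`.
-/

theorem Equiv.Perm.eq_of_lt_iff_lt {α : Type*} [LinearOrder α] [WellFoundedLT α]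
    {π τ : Equiv.Perm α} (h : ∀ k l, π k < π l ↔ τ k < τ l) : π = τ := by
  have hmono : StrictMono (π ∘ τ.symm) := fun x y hxy => by
    simpa [h] using hxy
  have := congrArg (⇑) (Subsingleton.elim (hmono.orderIsoOfSurjective _
    (π.surjective.comp τ.symm.surjective)) (OrderIso.refl α))
  ext k
  simpa using congrFun this (τ k)

theorem Set.lt_iff_lt_of_notMem_uIoo {β : Type*} [LinearOrder β] {a b x : β}
    (hx : x ∉ Set.uIoo a b) (ha : x ≠ a) (hb : x ≠ b) :
    (a < x ↔ b < x) ∧ (x < a ↔ x < b) := by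
  simp only [Set.uIoo_eq_union, Set.mem_union, Set.mem_Ioo, not_or, not_and, not_lt] at hx
  grind

theorem swap_lt_swap_iff_of_notMem_uIoo {α β : Type*} [DecidableEq α] [LinearOrder β]
    {g : α → β} (hg : Function.Injective g) {i j p q : α} (hp : p ≠ i) (hq : q ≠ i)
    (hpij : g p ∉ Set.uIoo (g i) (g j)) (hqij : g q ∉ Set.uIoo (g i) (g j)) :
    g (Equiv.swap i j p) < g (Equiv.swap i j q) ↔ g p < g q := by
  by_cases hpj : p = j <;> by_cases hqj : q = j
  · simp [hpj, hqj]
  · subst hpj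
    rw [Equiv.swap_apply_right, Equiv.swap_apply_of_ne_of_ne hq hqj]
    exact (Set.lt_iff_lt_of_notMem_uIoo hqij (hg.ne hq) (hg.ne hqj)).1
  · subst hqj
    rw [Equiv.swap_apply_right, Equiv.swap_apply_of_ne_of_ne hp hpj]
    exact (Set.lt_iff_lt_of_notMem_uIoo hpij (hg.ne hp) (hg.ne hpj)).2
  · rw [Equiv.swap_apply_of_ne_of_ne hp hpj, Equiv.swap_apply_of_ne_of_ne hq hqj]

theorem Fin.card_Ioo_inf_sup {n : ℕ} (a b : Fin n) :
    #(Ioo (a ⊓ b) (a ⊔ b)) = Nat.dist a b - 1 := by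
  rw [Fin.card_Ioo, Nat.dist]
  rcases le_total a b with h | h <;> simp [h]

namespace Prolific

theorem pattern_lt_pattern_iff {n m : ℕ} (σ : Equiv.Perm (Fin n)) (A : Finset (Fin n))
    (h : Aᶜ.card = m) (k l : Fin m) :
    pattern σ A h k < pattern σ A h l ↔
      σ (Aᶜ.orderEmbOfFin h k) < σ (Aᶜ.orderEmbOfFin h l) := by
  simp [pattern, ← Finset.coe_orderIsoOfFin_apply]

theorem pattern_eq_of_strictMonoOn {n m : ℕ} {σ : Equiv.Perm (Fin n)} {A B : Finset (Fin n)}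
    (hA : Aᶜ.card = m) (hB : Bᶜ.card = m) {f : Fin n → Fin n}
    (hmaps : Set.MapsTo f (↑A)ᶜ (↑B)ᶜ) (hpos : StrictMonoOn f (↑A)ᶜ)
    (hval : ∀ p ∉ A, ∀ q ∉ A, σ (f p) < σ (f q) ↔ σ p < σ q) :
    pattern σ A hA = pattern σ B hB := by
  have hmem k : Aᶜ.orderEmbOfFin hA k ∉ A := mem_compl.mp (Aᶜ.orderEmbOfFin_mem hA k)
  have hemb : Bᶜ.orderEmbOfFin hB = fun k => f (Aᶜ.orderEmbOfFin hA k) :=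
    (orderEmbOfFin_unique hB (fun k => mem_compl.mpr (hmaps (hmem k)))
      fun k l hkl => hpos (hmem k) (hmem l) ((Aᶜ.orderEmbOfFin hA).strictMono hkl)).symm
  refine Equiv.Perm.eq_of_lt_iff_lt fun k l => ?_
  rw [pattern_lt_pattern_iff, pattern_lt_pattern_iff, hemb, hval _ (hmem k) _ (hmem l)]

theorem mem_span {n : ℕ} {σ : Equiv.Perm (Fin n)} {i j p : Fin n} :
    p ∈ span σ i j ↔
      p ≠ i ∧ p ≠ j ∧ (p ∈ Set.uIoo i j ∨ σ p ∈ Set.uIoo (σ i) (σ j)) := by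
  simp [span, Set.uIoo_eq_union]

theorem patternEq_insert_insert_of_span_subset {n : ℕ} {σ : Equiv.Perm (Fin n)} {i j : Fin n}
    {T : Finset (Fin n)} (hT : span σ i j ⊆ T) (hi : i ∉ T) (hj : j ∉ T) :
    PatternEq σ (insert i T) (insert j T) := by
  obtain rfl | hij := eq_or_ne i j
  · exact ⟨_, rfl, rfl, rfl⟩
  have hcard : (insert j T)ᶜ.card = (insert i T)ᶜ.card := by
    rw [card_compl, card_compl, card_insert_of_notMem hi, card_insert_of_notMem hj]
  have hout {p : Fin n} (hp : p ∉ insert i T) :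
      p ≠ i ∧ p ∉ Set.uIoo i j ∧ σ p ∉ Set.uIoo (σ i) (σ j) := by
    have hpS : p ∉ span σ i j := fun h => hp (mem_insert_of_mem (hT h))
    by_cases hpj : p = j
    · simp_all
    · simp_all [mem_span]
  refine ⟨_, rfl, hcard, pattern_eq_of_strictMonoOn _ _ (f := Equiv.swap i j) ?_ ?_ ?_⟩
  · intro p hp
    by_cases hpj : p = j
    · simp_all
    · simp_all [Equiv.swap_apply_of_ne_of_ne]
  · intro p hp q hq hpq
    obtain ⟨hpi, hp, -⟩ := hout hp
    obtain ⟨hqi, hq, -⟩ := hout hq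
    exact (swap_lt_swap_iff_of_notMem_uIoo (g := id) Function.injective_id hpi hqi hp hq).2
      hpq
  · intro p hp q hq
    obtain ⟨hpi, -, hp⟩ := hout hp
    obtain ⟨hqi, -, hq⟩ := hout hq
    exact swap_lt_swap_iff_of_notMem_uIoo σ.injective hpi hqi hp hq

theorem card_span_le {n : ℕ} (σ : Equiv.Perm (Fin n)) (i j : Fin n) :
    #(span σ i j) ≤ dperm σ i j - 2 := by
  obtain rfl | hij := eq_or_ne i j
  · have : span σ i i = ∅ := by ext p; simp [mem_span]
    simp [this]
  have hsub : span σ i j ⊆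
      Ioo (i ⊓ j) (i ⊔ j) ∪ (Ioo (σ i ⊓ σ j) (σ i ⊔ σ j)).map σ.symm.toEmbedding := by
    intro p hp
    simp only [mem_span, Set.uIoo, Set.mem_Ioo] at hp
    simp only [mem_union, mem_map_equiv, Equiv.symm_symm, mem_Ioo]
    tauto
  have hdpos : 0 < Nat.dist i j := Nat.dist_pos_of_ne (Fin.val_ne_of_ne hij)
  have hdval : 0 < Nat.dist (σ i) (σ j) :=
    Nat.dist_pos_of_ne (Fin.val_ne_of_ne (σ.injective.ne hij))
  have := (card_le_card hsub).trans (card_union_le _ _)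
  rw [card_map, Fin.card_Ioo_inf_sup, Fin.card_Ioo_inf_sup] at this
  unfold dperm
  omega

theorem span_deletion_general {n : ℕ} (σ : Equiv.Perm (Fin n)) (i j : Fin n) :
    (span σ i j).card ≤ dperm σ i j - 2 ∧
    (∀ X : Finset (Fin n), i ∉ X → j ∉ X →
      PatternEq σ (span σ i j ∪ {i} ∪ X) (span σ i j ∪ {j} ∪ X)) ∧
    PatternEq σ (insert i (span σ i j)) (insert j (span σ i j)) := by
  have hi : i ∉ span σ i j := by simp [mem_span]
  have hj : j ∉ span σ i j := by simp [mem_span]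
  refine ⟨card_span_le σ i j, fun X hiX hjX => ?_,
    patternEq_insert_insert_of_span_subset subset_rfl hi hj⟩
  have key := patternEq_insert_insert_of_span_subset (T := span σ i j ∪ X)
    subset_union_left (by simp [hi, hiX]) (by simp [hj, hjX])
  rwa [insert_eq, insert_eq, union_comm {i}, union_comm {j}, union_right_comm,
    union_right_comm _ X] at key

/-- Deleting the span together with either one of `i`, `j` (and any further common set of
positions `X`) yields the same pattern; moreover the span has at most `d_σ(i,j) - 2`
elements. -/
theorem span_deletion {n : ℕ} (σ : Equiv.Perm (Fin n)) (i j : Fin n) (hij : i ≠ j) :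
    (span σ i j).card ≤ dperm σ i j - 2 ∧
    (∀ X : Finset (Fin n), i ∉ X → j ∉ X →
      PatternEq σ (span σ i j ∪ {i} ∪ X) (span σ i j ∪ {j} ∪ X)) ∧
    PatternEq σ (insert i (span σ i j)) (insert j (span σ i j)) :=
  span_deletion_general σ i j

end Prolific
end

section
/- Let σ be a permutation of size n ≥ 2 with br(σ) ≥ 3. Then the n patterns of size n−1 obtained by deleting a single entry of σ are pairwise distinct: σ_⟨{i}⟩ ≠ σ_⟨{j}⟩ for all distinct i, j ∈ {1,…,n} (that is, σ is 1-prolific). -/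
open Finset

namespace Prolific

/-! Suppose deleting positions `i < j` of `σ` gives the same pattern `π`. Deleting a single
entry `k` gives the pattern characterised by `(σ k).succAbove (π s) = σ (k.succAbove s)`.
Evaluating at the position `s = i` of `π`, which is position `i + 1` of `σ` after deleting `i`
and position `i` after deleting `j`, shows that `σ (i + 1)` and `σ i` both lie in `{π i, π i + 1}`.
So the adjacent entries `i` and `i + 1` are at distance at most `1 + 1 = 2`, and `br(σ) ≤ 2`. -/

lemma Fin.dist_succAbove_succAbove_le_one {m : ℕ} (a b : Fin (m + 1)) (t : Fin m) :
    Nat.dist (a.succAbove t) (b.succAbove t) ≤ 1 := by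
  have hval : ∀ c : Fin (m + 1), (c.succAbove t : ℕ) = t ∨ (c.succAbove t : ℕ) = t + 1 := by
    intro c
    rcases c.castSucc_lt_or_lt_succ t with h | h
    · exact Or.inl (by rw [Fin.succAbove_of_castSucc_lt _ _ h, Fin.val_castSucc])
    · exact Or.inr (by rw [Fin.succAbove_of_lt_succ _ _ h, Fin.val_succ])
  unfold Nat.dist
  rcases hval a with ha | ha <;> rcases hval b with hb | hb <;> omega

lemma coe_orderIsoOfFin_of_eq_compl_singleton {m : ℕ} {S : Finset (Fin (m + 1))}
    {k : Fin (m + 1)} (hS : S = {k}ᶜ) (h : S.card = m) (s : Fin m) :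
    (S.orderIsoOfFin h s : Fin (m + 1)) = k.succAbove s := by
  subst hS
  rw [Finset.coe_orderIsoOfFin_apply, ← Finset.orderEmbOfFin_unique h
    (fun s => by simp [Fin.succAbove_ne]) (Fin.strictMono_succAbove k)]

lemma image_compl_singleton_perm {α : Type*} [Fintype α] [DecidableEq α]
    (σ : Equiv.Perm α) (k : α) : ({k}ᶜ : Finset α).image σ = {σ k}ᶜ := by
  ext x
  obtain ⟨y, rfl⟩ := σ.surjective x
  simp

lemma succAbove_pattern_singleton {m : ℕ} (σ : Equiv.Perm (Fin (m + 1))) (k : Fin (m + 1))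
    (h : ({k}ᶜ : Finset (Fin (m + 1))).card = m) (s : Fin m) :
    (σ k).succAbove (pattern σ {k} h s) = σ (k.succAbove s) := by
  have himage : (({k}ᶜ : Finset (Fin (m + 1))).image σ).card = m := by
    rw [Finset.card_image_of_injective _ σ.injective, h]
  rw [← coe_orderIsoOfFin_of_eq_compl_singleton (image_compl_singleton_perm σ k) himage,
    ← coe_orderIsoOfFin_of_eq_compl_singleton rfl h]
  simp [pattern]

lemma breadth_le_dperm {n : ℕ} (σ : Equiv.Perm (Fin n)) {i j : Fin n} (hij : i ≠ j) :
    breadth σ ≤ dperm σ i j :=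
  Nat.sInf_le ⟨i, j, hij, rfl⟩

lemma breadth_le_two_of_pattern_eq {m : ℕ} (σ : Equiv.Perm (Fin (m + 1))) {i j : Fin (m + 1)}
    (hij : i < j) (hi : ({i}ᶜ : Finset (Fin (m + 1))).card = m)
    (hj : ({j}ᶜ : Finset (Fin (m + 1))).card = m) (hπ : pattern σ {i} hi = pattern σ {j} hj) :
    breadth σ ≤ 2 := by
  have hlast : i ≠ Fin.last m := (hij.trans_le (Fin.le_last j)).ne
  set s := i.castPred hlast
  have hσi : (σ j).succAbove (pattern σ {i} hi s) = σ i := by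
    rw [hπ, succAbove_pattern_singleton, Fin.succAbove_castPred_of_lt _ _ hij]
  have hσs : (σ i).succAbove (pattern σ {i} hi s) = σ s.succ := by
    rw [succAbove_pattern_singleton, Fin.succAbove_castPred_self]
  calc breadth σ ≤ dperm σ i s.succ := breadth_le_dperm σ (by simp [s, Fin.ext_iff])
    _ ≤ 1 + 1 := by
      unfold dperm
      gcongr
      · simp [s, Nat.dist]
      · rw [← hσi, ← hσs]
        exact Fin.dist_succAbove_succAbove_le_one _ _ _

lemma PatternEq.symm {n : ℕ} {σ : Equiv.Perm (Fin n)} {A B : Finset (Fin n)}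
    (h : PatternEq σ A B) : PatternEq σ B A :=
  let ⟨m, hA, hB, hπ⟩ := h
  ⟨m, hB, hA, hπ.symm⟩

lemma not_patternEq_singleton_of_lt {n : ℕ} {σ : Equiv.Perm (Fin n)} (hbr : 3 ≤ breadth σ)
    {i j : Fin n} (hij : i < j) : ¬ PatternEq σ {i} {j} := by
  rintro ⟨m, hi, hj, hπ⟩
  obtain rfl : n = m + 1 := by
    rw [Finset.card_compl, Finset.card_singleton, Fintype.card_fin] at hi
    omega
  have := breadth_le_two_of_pattern_eq σ hij hi hj hπ
  omega

theorem one_prolific_of_breadth_general {n : ℕ} (σ : Equiv.Perm (Fin n))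
    (hbr : 3 ≤ breadth σ) :
    (∀ i j : Fin n, i ≠ j → ¬ PatternEq σ ({i} : Finset (Fin n)) ({j} : Finset (Fin n))) ∧
    IsProlific 1 σ := by
  have hsingle : ∀ i j : Fin n, i ≠ j → ¬ PatternEq σ {i} {j} := by
    intro i j hij
    rcases hij.lt_or_gt with h | h
    · exact not_patternEq_singleton_of_lt hbr h
    · exact fun hπ => not_patternEq_singleton_of_lt hbr h hπ.symm
  refine ⟨hsingle, fun A B hA hB hAB => ?_⟩
  obtain ⟨i, rfl⟩ := Finset.card_eq_one.mp hA
  obtain ⟨j, rfl⟩ := Finset.card_eq_one.mp hB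
  exact hsingle i j (by rintro rfl; exact hAB rfl)

/-- If `br(σ) ≥ 3` then the `n` patterns of size `n - 1` obtained by deleting a single
entry of `σ` are pairwise distinct; that is, `σ` is `1`-prolific. -/
theorem one_prolific_of_breadth {n : ℕ} (hn : 2 ≤ n) (σ : Equiv.Perm (Fin n))
    (hbr : 3 ≤ breadth σ) :
    (∀ i j : Fin n, i ≠ j → ¬ PatternEq σ ({i} : Finset (Fin n)) ({j} : Finset (Fin n))) ∧
    IsProlific 1 σ :=
  one_prolific_of_breadth_general σ hbr

end Prolific
end
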